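/- arXiv:2210.06917 — 3 statements merged into one kernel-verified Lean document; each statement's English description precedes it below -/
import Mathlib

section
/- For probability vectors y and z over a finite set (y_i, z_i ≥ 0, ∑_i y_i = 1, ∑_i z_i = 1, with z_i > 0 whenever y_i > 0), the sum of squared differences is bounded by the KL divergence: ∑_i (y_i − z_i)² ≤ ∑_i y_i · ln(y_i / z_i). -/
/-!
Let `L = ∑ i, |y i - z i|`. Since `∑ i, (y i - z i) = 0`, every `|y j - z j|` is at most `L / 2`,
hence `∑ i, (y i - z i) ^ 2 ≤ L ^ 2 / 2`, and it remains to prove Pinsker's inequality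
`L ^ 2 ≤ 2 KL(y ‖ z)`. Writing `KL(y ‖ z) = ∑ i, z i * klFun (y i / z i)`, it follows from the
pointwise bound `3 (t - 1) ^ 2 ≤ 2 (t + 2) klFun t` by Cauchy–Schwarz with the weights
`y i + 2 z i`, whose total is `3`.
-/

open Real Finset InformationTheory

lemma monotoneOn_add_one_mul_log_sub :
    MonotoneOn (fun t ↦ (t + 1) * log t - 2 * (t - 1)) (Set.Ioi 0) := by
  have hderiv : ∀ t ∈ Set.Ioi (0 : ℝ),
      HasDerivAt (fun t ↦ (t + 1) * log t - 2 * (t - 1)) (log t - (1 - t⁻¹)) t := by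
    intro t ht
    have := (((hasDerivAt_id t).add_const 1).mul (hasDerivAt_log (ne_of_gt ht))).sub
      (((hasDerivAt_id t).sub_const 1).const_mul 2)
    refine this.congr_deriv ?_
    rw [id, add_mul, mul_inv_cancel₀ (ne_of_gt ht)]
    ring
  refine monotoneOn_of_hasDerivWithinAt_nonneg (f' := fun t ↦ log t - (1 - t⁻¹)) (convex_Ioi 0)
    (fun t ht ↦ (hderiv t ht).continuousAt.continuousWithinAt) (fun t ht ↦ ?_) (fun t ht ↦ ?_)
  · rw [interior_Ioi] at ht ⊢
    exact (hderiv t ht).hasDerivWithinAt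
  · rw [interior_Ioi] at ht
    exact sub_nonneg.2 (one_sub_inv_le_log_of_pos ht)

lemma two_mul_sub_one_le_add_one_mul_log {t : ℝ} (ht : 1 ≤ t) :
    2 * (t - 1) ≤ (t + 1) * log t := by
  have := monotoneOn_add_one_mul_log_sub (by norm_num : (1 : ℝ) ∈ Set.Ioi 0)
    (show t ∈ Set.Ioi 0 from zero_lt_one.trans_le ht) ht
  simp only [log_one] at this
  linarith

lemma add_one_mul_log_le_two_mul_sub_one {t : ℝ} (h0 : 0 < t) (ht : t ≤ 1) :
    (t + 1) * log t ≤ 2 * (t - 1) := by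
  have := monotoneOn_add_one_mul_log_sub h0 (by norm_num : (1 : ℝ) ∈ Set.Ioi 0) ht
  simp only [log_one] at this
  linarith

lemma three_mul_sub_one_sq_le_klFun {t : ℝ} (ht : 0 ≤ t) :
    3 * (t - 1) ^ 2 ≤ 2 * (t + 2) * klFun t := by
  set g : ℝ → ℝ := fun t ↦ 2 * (t + 2) * klFun t - 3 * (t - 1) ^ 2
  have hderiv : ∀ t ≠ 0, HasDerivAt g (4 * ((t + 1) * log t - 2 * (t - 1))) t := by
    intro t ht
    have := ((((hasDerivAt_id t).add_const 2).const_mul 2).mul (hasDerivAt_klFun ht)).sub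
      ((((hasDerivAt_id t).sub_const 1).pow 2).const_mul 3)
    refine this.congr_deriv ?_
    simp only [klFun, id]
    ring
  have hcont : Continuous g := by unfold g; have := continuous_klFun; fun_prop
  have hdiff : ∀ s : Set ℝ, s ⊆ Set.Ioi 0 → DifferentiableOn ℝ g s := fun s hs t ht ↦
    (hderiv t (hs ht).ne').differentiableAt.differentiableWithinAt
  have hmin : IsMinOn g (Set.Ici 0) 1 :=
    isMinOn_Ici_of_deriv hcont.continuousAt hcont.continuousAt
      (hdiff _ Set.Ioo_subset_Ioi_self)
      (hdiff _ fun t (ht : 1 < t) ↦ lt_trans one_pos ht)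
      (fun t ht ↦ by
        rw [(hderiv t ht.1.ne').deriv]
        nlinarith [add_one_mul_log_le_two_mul_sub_one ht.1 ht.2.le])
      (fun t ht ↦ by
        rw [(hderiv t (lt_trans one_pos ht).ne').deriv]
        nlinarith [two_mul_sub_one_le_add_one_mul_log (le_of_lt ht)])
  have := isMinOn_iff.1 hmin t ht
  simp only [g, klFun_one] at this
  linarith

lemma mul_klFun_div_eq {y z : ℝ} (hy : 0 ≤ y) (hyz : 0 < y → 0 < z) :
    z * klFun (y / z) = y * log (y / z) + z - y := by
  rcases hy.eq_or_lt with rfl | hy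
  · simp [klFun]
  · rw [klFun, mul_sub, mul_add, ← mul_assoc, mul_div_cancel₀ _ (hyz hy).ne']
    ring

lemma three_mul_sub_sq_le_mul_klFun_div {y z : ℝ} (hy : 0 ≤ y) (hz : 0 ≤ z)
    (hyz : 0 < y → 0 < z) : 3 * (y - z) ^ 2 ≤ 2 * (y + 2 * z) * (z * klFun (y / z)) := by
  rcases hz.eq_or_lt with rfl | hz
  · obtain rfl : y = 0 := le_antisymm (not_lt.1 fun h ↦ (hyz h).false) hy
    simp
  · calc 3 * (y - z) ^ 2 = z ^ 2 * (3 * (y / z - 1) ^ 2) := by field_simp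
      _ ≤ z ^ 2 * (2 * (y / z + 2) * klFun (y / z)) :=
        mul_le_mul_of_nonneg_left (three_mul_sub_one_sq_le_klFun (div_nonneg hy hz.le))
          (sq_nonneg z)
      _ = 2 * (y + 2 * z) * (z * klFun (y / z)) := by field_simp

section Finite

variable {ι : Type*} [Fintype ι]

lemma two_nsmul_abs_le_sum_abs_of_sum_eq_zero {G : Type*} [AddCommGroup G] [LinearOrder G]
    [IsOrderedAddMonoid G] {d : ι → G} (h : ∑ i, d i = 0) (j : ι) :
    2 • |d j| ≤ ∑ i, |d i| := by
  classical
  rw [← add_sum_erase _ _ (mem_univ j)] at h ⊢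
  have : |d j| ≤ ∑ i ∈ univ.erase j, |d i| := by
    rw [eq_neg_of_add_eq_zero_left h, abs_neg]
    exact abs_sum_le_sum_abs _ _
  rw [two_nsmul]
  exact add_le_add le_rfl this

lemma two_mul_sum_sq_le_sq_sum_abs {d : ι → ℝ} (h : ∑ i, d i = 0) :
    2 * ∑ i, d i ^ 2 ≤ (∑ i, |d i|) ^ 2 :=
  calc 2 * ∑ i, d i ^ 2 = ∑ i, |d i| * (2 • |d i|) := by
        rw [mul_sum]
        refine sum_congr rfl fun i _ ↦ ?_
        rw [← sq_abs, two_nsmul]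
        ring
    _ ≤ ∑ i, |d i| * ∑ j, |d j| := by
        gcongr with i
        exact two_nsmul_abs_le_sum_abs_of_sum_eq_zero h i
    _ = (∑ i, |d i|) ^ 2 := by rw [← sum_mul, sq]

lemma sum_mul_log_div_eq_sum_mul_klFun {y z : ι → ℝ} (hy0 : ∀ i, 0 ≤ y i)
    (hac : ∀ i, 0 < y i → 0 < z i) (hyz : ∑ i, y i = ∑ i, z i) :
    ∑ i, y i * log (y i / z i) = ∑ i, z i * klFun (y i / z i) := by
  simp only [mul_klFun_div_eq (hy0 _) (hac _), sum_sub_distrib, sum_add_distrib, hyz]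
  ring

theorem sq_sum_abs_sub_le_two_mul_sum_mul_klFun {y z : ι → ℝ} (hy0 : ∀ i, 0 ≤ y i)
    (hz0 : ∀ i, 0 ≤ z i) (hy1 : ∑ i, y i = 1) (hz1 : ∑ i, z i = 1)
    (hac : ∀ i, 0 < y i → 0 < z i) :
    (∑ i, |y i - z i|) ^ 2 ≤ 2 * ∑ i, z i * klFun (y i / z i) := by
  have hCS := sum_sq_le_sum_mul_sum_of_sq_le_mul univ (r := fun i ↦ |y i - z i|)
    (f := fun i ↦ y i + 2 * z i) (g := fun i ↦ 2 / 3 * (z i * klFun (y i / z i)))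
    (fun i _ ↦ by linarith [hy0 i, hz0 i])
    (fun i _ ↦ mul_nonneg (by norm_num)
      (mul_nonneg (hz0 i) (klFun_nonneg (div_nonneg (hy0 i) (hz0 i)))))
    (fun i _ ↦ by
      have := three_mul_sub_sq_le_mul_klFun_div (hy0 i) (hz0 i) (hac i)
      rw [sq_abs]
      linarith)
  rwa [sum_add_distrib, ← mul_sum, ← mul_sum, hy1, hz1, ← mul_assoc,
    show (1 + 2 * 1 : ℝ) * (2 / 3) = 2 by norm_num] at hCS

end Finite

theorem stmt_0 (n : ℕ) (y z : Fin n → ℝ)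
    (hy0 : ∀ i, 0 ≤ y i) (hz0 : ∀ i, 0 ≤ z i)
    (hy1 : ∑ i, y i = 1) (hz1 : ∑ i, z i = 1)
    (hac : ∀ i, 0 < y i → 0 < z i) :
    ∑ i, (y i - z i) ^ 2 ≤ ∑ i, y i * Real.log (y i / z i) := by
  have hsum : ∑ i, (y i - z i) = 0 := by rw [sum_sub_distrib, hy1, hz1, sub_self]
  have hL2 := two_mul_sum_sq_le_sq_sum_abs hsum
  have hPinsker := sq_sum_abs_sub_le_two_mul_sum_mul_klFun hy0 hz0 hy1 hz1 hac
  rw [sum_mul_log_div_eq_sum_mul_klFun hy0 hac (hy1.trans hz1.symm)]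
  linarith
end

section
/- Cumulative squared prediction error bound: let μ be a probability measure on sequences r_{1:n} over a finite reward alphabet and ξ a mixture ξ = ∑_ρ w_ρ ρ over a finite model class with positive weights summing to at most 1. Then ∑_{k=1}^n ∑_{r_{1:k}} μ(r_{<k}) (μ(r_k|r_{<k}) − ξ(r_k|r_{<k}))² ≤ min_ρ ( −ln w_ρ + KL(μ(·)‖ρ(·)) ), where the KL divergence is over full length-n sequences. -/
open Finset Real

lemma sq_sum_le {ι : Type*} (s : Finset ι) (t : ι → ℝ) (h : ∀ i ∈ s, 0 ≤ t i) :
    ∑ i ∈ s, (t i)^2 ≤ (∑ i ∈ s, t i)^2 := by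
  calc ∑ i ∈ s, (t i)^2 ≤ ∑ i ∈ s, t i * (∑ j ∈ s, t j) := by
        apply Finset.sum_le_sum; intro i hi
        rw [sq]
        exact mul_le_mul_of_nonneg_left (Finset.single_le_sum h hi) (h i hi)
    _ = (∑ i ∈ s, t i)^2 := by rw [← Finset.sum_mul, sq]

lemma log_sum_ineq {ι : Type*} (s : Finset ι) (y z : ι → ℝ)
    (hy0 : ∀ i ∈ s, 0 ≤ y i) (hz0 : ∀ i ∈ s, 0 ≤ z i)
    (himp : ∀ i ∈ s, 0 < y i → 0 < z i) :
    (∑ i ∈ s, y i) * (Real.log (∑ i ∈ s, y i) - Real.log (∑ i ∈ s, z i)) ≤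
      ∑ i ∈ s, y i * (Real.log (y i) - Real.log (z i)) := by
  set Y := ∑ i ∈ s, y i with hY
  set Z := ∑ i ∈ s, z i with hZ
  rcases eq_or_lt_of_le (Finset.sum_nonneg hy0) with h0 | hYpos
  · have hzero : ∀ i ∈ s, y i = 0 := (Finset.sum_eq_zero_iff_of_nonneg hy0).mp h0.symm
    rw [hY.trans h0.symm, zero_mul]
    apply le_of_eq
    symm
    apply Finset.sum_eq_zero
    intro i hi; rw [hzero i hi, zero_mul]
  · obtain ⟨i0, hi0, hyi0⟩ : ∃ i ∈ s, 0 < y i := by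
      obtain ⟨i, hi, hlt⟩ := Finset.exists_lt_of_sum_lt (by simpa using hYpos :
        ∑ i ∈ s, (0:ℝ) < ∑ i ∈ s, y i)
      exact ⟨i, hi, hlt⟩
    have hZpos : 0 < Z := lt_of_lt_of_le (himp i0 hi0 hyi0)
      (Finset.single_le_sum hz0 hi0)
    have key : ∀ i ∈ s, y i - z i * Y / Z ≤
        y i * (Real.log (y i) - Real.log (z i)) - y i * (Real.log Y - Real.log Z) := by
      intro i hi
      rcases eq_or_lt_of_le (hy0 i hi) with h | h
      · rw [← h]
        simp only [zero_mul, zero_sub, sub_zero, zero_mul, sub_self]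
        have : 0 ≤ z i * Y / Z := by
          apply div_nonneg (mul_nonneg (hz0 i hi) hYpos.le) hZpos.le
        linarith
      · have hzi := himp i hi h
        have hu : 0 < y i * Z / (z i * Y) := by positivity
        have hlog := Real.one_sub_inv_le_log_of_pos hu
        rw [Real.log_div (by positivity) (by positivity),
          Real.log_mul (ne_of_gt h) (ne_of_gt hZpos),
          Real.log_mul (ne_of_gt hzi) (ne_of_gt hYpos)] at hlog
        have hinv : (y i * Z / (z i * Y))⁻¹ = z i * Y / (y i * Z) := by
          rw [inv_div]
        rw [hinv] at hlog
        have hmul := mul_le_mul_of_nonneg_left hlog h.le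
        have heq : y i * (1 - z i * Y / (y i * Z)) = y i - z i * Y / Z := by
          field_simp
        nlinarith [hmul, heq]
    have hsum := Finset.sum_le_sum key
    rw [Finset.sum_sub_distrib, Finset.sum_sub_distrib, ← Finset.sum_mul] at hsum
    have e1 : ∑ i ∈ s, z i * Y / Z = Y := by
      rw [← Finset.sum_div, ← Finset.sum_mul, ← hZ]
      field_simp
    rw [e1, ← hY, sub_self] at hsum
    linarith

lemma pinsker2 (p q : ℝ) (hp0 : 0 ≤ p) (hp1 : p ≤ 1) (hq0 : 0 ≤ q) (hq1 : q ≤ 1)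
    (h1 : 0 < p → 0 < q) (h2 : p < 1 → q < 1) :
    2 * (p - q)^2 ≤
      p * (Real.log p - Real.log q) + (1 - p) * (Real.log (1 - p) - Real.log (1 - q)) := by
  set f : ℝ → ℝ := fun t => p * Real.log p + (1 - p) * Real.log (1 - p)
      - p * Real.log t - (1 - p) * Real.log (1 - t) - 2 * (p - t)^2 with hf
  have hfp : f p = 0 := by simp only [hf]; ring
  have hderiv : ∀ t : ℝ, 0 < t → t < 1 →
      HasDerivAt f (-(p * t⁻¹) + (1 - p) * (1 - t)⁻¹ + 4 * (p - t)) t := by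
    intro t ht0 ht1
    have h1t : (1:ℝ) - t ≠ 0 := ne_of_gt (by linarith)
    have hlog : HasDerivAt (fun t : ℝ => p * Real.log t) (p * t⁻¹) t :=
      (Real.hasDerivAt_log (ne_of_gt ht0)).const_mul p
    have inner1 : HasDerivAt (fun t : ℝ => 1 - t) (-1) t := by
      simpa using (hasDerivAt_id t).const_sub 1
    have hlog2 : HasDerivAt (fun t : ℝ => (1 - p) * Real.log (1 - t))
        ((1 - p) * -(1 - t)⁻¹) t := by
      have := ((Real.hasDerivAt_log h1t).comp t inner1).const_mul (1 - p)
      simpa [mul_comm, mul_neg] using this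
    have inner2 : HasDerivAt (fun t : ℝ => p - t) (-1) t := by
      simpa using (hasDerivAt_id t).const_sub p
    have hsq : HasDerivAt (fun t : ℝ => 2 * (p - t)^2) (2 * ((2:ℕ) * (p - t)^1 * -1)) t :=
      (inner2.pow 2).const_mul 2
    have H := (((hasDerivAt_const t (p * Real.log p + (1 - p) * Real.log (1 - p))).sub
      hlog).sub hlog2).sub hsq
    refine H.congr_deriv ?_
    push_cast
    ring
  have derivval : ∀ t : ℝ, 0 < t → t < 1 →
      deriv f t = (t - p) * (2*t - 1)^2 / (t * (1 - t)) := by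
    intro t ht0 ht1
    rw [(hderiv t ht0 ht1).deriv, eq_div_iff (by nlinarith : t * (1 - t) ≠ 0)]
    have h1t : (1:ℝ) - t ≠ 0 := ne_of_gt (by linarith)
    field_simp
    ring
  have contlog1 : ∀ a b : ℝ, 0 < a ∨ p = 0 → (0:ℝ) ≤ a →
      ContinuousOn (fun t : ℝ => p * Real.log t) (Set.Icc a b) := by
    intro a b hcase ha
    rcases hcase with hcase | hcase
    · exact continuousOn_const.mul (Real.continuousOn_log.mono (fun x hx => by
        simp only [Set.mem_compl_iff, Set.mem_singleton_iff]
        exact ne_of_gt (lt_of_lt_of_le hcase hx.1)))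
    · simp only [hcase, zero_mul]
      exact continuousOn_const
  have contlog2 : ∀ a b : ℝ, b < 1 ∨ p = 1 →
      ContinuousOn (fun t : ℝ => (1 - p) * Real.log (1 - t)) (Set.Icc a b) := by
    intro a b hcase
    rcases hcase with hcase | hcase
    · apply continuousOn_const.mul
      apply (Real.continuousOn_log.comp (continuous_const.sub continuous_id).continuousOn)
      intro x hx
      simp only [Set.mem_compl_iff, Set.mem_singleton_iff, Function.comp]
      have : x ≤ b := hx.2
      exact ne_of_gt (by simp; linarith)
    · simp only [hcase, sub_self, zero_mul]
      exact continuousOn_const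
  have contf : ∀ a b : ℝ, (0 < a ∨ p = 0) → 0 ≤ a → (b < 1 ∨ p = 1) →
      ContinuousOn f (Set.Icc a b) := by
    intro a b h1' h2' h3'
    simp only [hf]
    exact ((((continuousOn_const.sub (contlog1 a b h1' h2')).sub (contlog2 a b h3')).sub
      ((continuous_const.mul ((continuous_const.sub continuous_id).pow 2)).continuousOn)))
  rcases lt_trichotomy p q with hpq | hpq | hpq
  · -- p < q
    have hq1' : q < 1 := by
      rcases eq_or_lt_of_le hq1 with h | h
      · exact absurd (h2 (lt_of_lt_of_le hpq hq1)) (by simp [h])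
      · exact h
    have hmono : MonotoneOn f (Set.Icc p q) := by
      apply monotoneOn_of_deriv_nonneg (convex_Icc p q)
      · rcases eq_or_lt_of_le hp0 with h | h
        · exact contf p q (Or.inr h.symm) hp0 (Or.inl hq1')
        · exact contf p q (Or.inl h) hp0 (Or.inl hq1')
      · intro t ht
        rw [interior_Icc] at ht
        exact (hderiv t (lt_of_le_of_lt hp0 ht.1) (ht.2.trans hq1')).differentiableAt.differentiableWithinAt
      · intro t ht
        rw [interior_Icc] at ht
        have ht0 : 0 < t := lt_of_le_of_lt hp0 ht.1
        have ht1 : t < 1 := ht.2.trans hq1'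
        rw [derivval t ht0 ht1]
        exact div_nonneg (mul_nonneg (by linarith [ht.1]) (sq_nonneg _))
          (mul_nonneg ht0.le (by linarith))
    have hle := hmono (Set.left_mem_Icc.mpr hpq.le) (Set.right_mem_Icc.mpr hpq.le) hpq.le
    rw [hfp] at hle
    simp only [hf] at hle
    linarith
  · subst hpq
    simp only [hf] at hfp
    linarith [hfp]
  · -- q < p
    have hq0' : 0 < q := h1 (lt_of_le_of_lt hq0 hpq)
    have hanti : AntitoneOn f (Set.Icc q p) := by
      apply antitoneOn_of_deriv_nonpos (convex_Icc q p)
      · apply contf q p (Or.inl hq0') hq0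
        rcases eq_or_lt_of_le hp1 with h | h
        · exact Or.inr h
        · exact Or.inl h
      · intro t ht
        rw [interior_Icc] at ht
        exact (hderiv t (hq0'.trans ht.1) (lt_of_lt_of_le ht.2 hp1)).differentiableAt.differentiableWithinAt
      · intro t ht
        rw [interior_Icc] at ht
        have ht0 : 0 < t := hq0'.trans ht.1
        have ht1 : t < 1 := lt_of_lt_of_le ht.2 hp1
        rw [derivval t ht0 ht1]
        apply div_nonpos_of_nonpos_of_nonneg
        · exact mul_nonpos_of_nonpos_of_nonneg (by linarith [ht.2]) (sq_nonneg _)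
        · exact mul_nonneg ht0.le (by linarith)
    have hle := hanti (Set.left_mem_Icc.mpr hpq.le) (Set.right_mem_Icc.mpr hpq.le) hpq.le
    rw [hfp] at hle
    simp only [hf] at hle
    linarith

section
variable {ι : Type*} [Fintype ι]

lemma entropy_ineq (y z : ι → ℝ) (hy0 : ∀ r, 0 ≤ y r) (hz0 : ∀ r, 0 ≤ z r)
    (hy1 : ∑ r, y r = 1) (hz1 : ∑ r, z r = 1) (himp : ∀ r, 0 < y r → 0 < z r) :
    ∑ r, (y r - z r)^2 ≤ ∑ r, y r * (Real.log (y r) - Real.log (z r)) := by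
  classical
  set A : Finset ι := Finset.univ.filter (fun r => z r ≤ y r) with hA
  set P : ℝ := ∑ r ∈ A, y r with hP
  set Q : ℝ := ∑ r ∈ A, z r with hQ
  set P' : ℝ := ∑ r ∈ Aᶜ, y r with hP'
  set Q' : ℝ := ∑ r ∈ Aᶜ, z r with hQ'
  have hPP' : P + P' = 1 := by
    rw [hP, hP', ← Finset.sum_add_sum_compl A y] at *
    exact hy1
  have hQQ' : Q + Q' = 1 := by
    rw [hQ, hQ', ← Finset.sum_add_sum_compl A z] at *
    exact hz1
  have hmemA : ∀ r ∈ A, z r ≤ y r := fun r hr => (Finset.mem_filter.mp hr).2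
  have hmemAc : ∀ r ∈ Aᶜ, y r ≤ z r := by
    intro r hr
    have := Finset.mem_compl.mp hr
    simp only [hA, Finset.mem_filter, Finset.mem_univ, true_and, not_le] at this
    exact this.le
  have hPQ : Q ≤ P := Finset.sum_le_sum hmemA
  have hP'Q' : P' ≤ Q' := Finset.sum_le_sum hmemAc
  have hdelta : Q' - P' = P - Q := by linarith
  -- squared part
  have hsq : ∑ r, (y r - z r)^2 ≤ 2 * (P - Q)^2 := by
    rw [← Finset.sum_add_sum_compl A]
    have e1 : ∑ r ∈ A, (y r - z r)^2 ≤ (P - Q)^2 := by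
      rw [hP, hQ, ← Finset.sum_sub_distrib]
      exact sq_sum_le A _ (fun i hi => by linarith [hmemA i hi])
    have e2 : ∑ r ∈ Aᶜ, (y r - z r)^2 ≤ (P - Q)^2 := by
      rw [← hdelta]
      calc ∑ r ∈ Aᶜ, (y r - z r)^2 = ∑ r ∈ Aᶜ, (z r - y r)^2 := by
            apply Finset.sum_congr rfl; intro r _; ring
        _ ≤ (Q' - P')^2 := by
            rw [hQ', hP', ← Finset.sum_sub_distrib]
            exact sq_sum_le Aᶜ _ (fun i hi => by linarith [hmemAc i hi])
    linarith
  -- KL part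
  have hls1 := log_sum_ineq A y z (fun i _ => hy0 i) (fun i _ => hz0 i) (fun i _ => himp i)
  have hls2 := log_sum_ineq Aᶜ y z (fun i _ => hy0 i) (fun i _ => hz0 i) (fun i _ => himp i)
  have hP0 : 0 ≤ P := Finset.sum_nonneg fun i _ => hy0 i
  have hP'0 : 0 ≤ P' := Finset.sum_nonneg fun i _ => hy0 i
  have hQ0 : 0 ≤ Q := Finset.sum_nonneg fun i _ => hz0 i
  have hQ'0 : 0 ≤ Q' := Finset.sum_nonneg fun i _ => hz0 i
  have hpin := pinsker2 P Q hP0 (by linarith) hQ0 (by linarith)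
    (by
      intro hPpos
      obtain ⟨i, hi, hlt⟩ := Finset.exists_lt_of_sum_lt
        (by simpa using hPpos : ∑ i ∈ A, (0:ℝ) < ∑ i ∈ A, y i)
      exact lt_of_lt_of_le (himp i hlt) (Finset.single_le_sum (fun j _ => hz0 j) hi))
    (by intro hPlt; linarith)
  have h1P : 1 - P = P' := by linarith
  have h1Q : 1 - Q = Q' := by linarith
  rw [h1P, h1Q] at hpin
  calc ∑ r, (y r - z r)^2 ≤ 2 * (P - Q)^2 := hsq
    _ ≤ P * (Real.log P - Real.log Q) + P' * (Real.log P' - Real.log Q') := hpin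
    _ ≤ ∑ r ∈ A, y r * (Real.log (y r) - Real.log (z r)) +
        ∑ r ∈ Aᶜ, y r * (Real.log (y r) - Real.log (z r)) := by
          exact add_le_add hls1 hls2
    _ = ∑ r, y r * (Real.log (y r) - Real.log (z r)) := Finset.sum_add_sum_compl A _

end

/-- Marginal probability of a length-`m` prefix under a measure on length-`n` sequences. -/
noncomputable def prefixMarginal {R : Type*} [Fintype R] [DecidableEq R] {n : ℕ}
    (μ : (Fin n → R) → ℝ) (m : ℕ) (h : m ≤ n) (p : Fin m → R) : ℝ :=
  ∑ x ∈ Finset.univ.filter (fun x : Fin n → R => ∀ i : Fin m, x (Fin.castLE h i) = p i), μ x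

section
variable {R : Type*} [Fintype R] [DecidableEq R] {n : ℕ}

lemma prefixMarginal_nonneg (μ : (Fin n → R) → ℝ) (hμ : ∀ x, 0 ≤ μ x) (m : ℕ) (h : m ≤ n)
    (p : Fin m → R) : 0 ≤ prefixMarginal μ m h p :=
  Finset.sum_nonneg fun x _ => hμ x

lemma prefixMarginal_zero (μ : (Fin n → R) → ℝ) (h : 0 ≤ n) (p : Fin 0 → R) :
    prefixMarginal μ 0 h p = ∑ x, μ x := by
  unfold prefixMarginal
  congr 1
  simp

lemma prefixMarginal_top (μ : (Fin n → R) → ℝ) (h : n ≤ n) (p : Fin n → R) :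
    prefixMarginal μ n h p = μ p := by
  unfold prefixMarginal
  have : Finset.univ.filter (fun x : Fin n → R => ∀ i : Fin n, x (Fin.castLE h i) = p i)
      = {p} := by
    ext x
    simp only [Finset.mem_filter, Finset.mem_univ, true_and, Finset.mem_singleton]
    constructor
    · intro hx
      funext i
      have := hx i
      simpa using this
    · rintro rfl i
      rfl
  rw [this, Finset.sum_singleton]

lemma sum_prefixMarginal_snoc (μ : (Fin n → R) → ℝ) (k : ℕ) (hk : k < n) (p : Fin k → R) :
    ∑ r : R, prefixMarginal μ (k + 1) hk (Fin.snoc p r) = prefixMarginal μ k hk.le p := by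
  unfold prefixMarginal
  rw [← Finset.sum_fiberwise (Finset.univ.filter
    fun x : Fin n → R => ∀ i : Fin k, x (Fin.castLE hk.le i) = p i) (fun x => x ⟨k, hk⟩) μ]
  apply Finset.sum_congr rfl
  intro r _
  congr 1
  ext x
  simp only [Finset.mem_filter, Finset.mem_univ, true_and]
  constructor
  · intro hx
    constructor
    · intro i
      have := hx (Fin.castSucc i)
      rwa [Fin.snoc_castSucc] at this
    · have := hx (Fin.last k)
      rwa [Fin.snoc_last] at this
  · rintro ⟨ha, hb⟩ i
    refine Fin.lastCases ?_ ?_ i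
    · rw [Fin.snoc_last]
      exact hb
    · intro j
      rw [Fin.snoc_castSucc]
      exact ha j

lemma sum_succ_eq_sum_snoc {k : ℕ} (f : (Fin (k + 1) → R) → ℝ) :
    ∑ q : Fin (k + 1) → R, f q = ∑ p : Fin k → R, ∑ r : R, f (Fin.snoc p r) := by
  rw [← Equiv.sum_comp (Fin.snocEquiv (fun _ => R)) f, Fintype.sum_prod_type]
  rw [Finset.sum_comm]
  rfl

lemma prefixMarginal_pos_of (μ ν : (Fin n → R) → ℝ) (hμ0 : ∀ x, 0 ≤ μ x) (hν0 : ∀ x, 0 ≤ ν x)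
    (himp : ∀ x, 0 < μ x → 0 < ν x) (m : ℕ) (h : m ≤ n) (p : Fin m → R)
    (hpos : 0 < prefixMarginal μ m h p) : 0 < prefixMarginal ν m h p := by
  unfold prefixMarginal at *
  obtain ⟨x, hx, hμx⟩ := Finset.exists_lt_of_sum_lt
    (by simpa using hpos : ∑ x ∈ Finset.univ.filter (fun x : Fin n → R =>
      ∀ i : Fin m, x (Fin.castLE h i) = p i), (0:ℝ) < _)
  exact lt_of_lt_of_le (himp x hμx) (Finset.single_le_sum (fun y _ => hν0 y) hx)

end
section
variable {R : Type*} [Fintype R] [DecidableEq R] {n : ℕ}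

noncomputable def Dfun (μ ξ : (Fin n → R) → ℝ) (j : ℕ) : ℝ :=
  if hj : j ≤ n then
    ∑ p : Fin j → R, prefixMarginal μ j hj p *
      (Real.log (prefixMarginal μ j hj p) - Real.log (prefixMarginal ξ j hj p))
  else 0

noncomputable def dfun (μ ξ : (Fin n → R) → ℝ) (k : ℕ) : ℝ :=
  if hk : k < n then
    ∑ p : Fin k → R, ∑ r : R, prefixMarginal μ (k + 1) hk (Fin.snoc p r) *
      ((Real.log (prefixMarginal μ (k + 1) hk (Fin.snoc p r)) -
          Real.log (prefixMarginal μ k hk.le p)) -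
        (Real.log (prefixMarginal ξ (k + 1) hk (Fin.snoc p r)) -
          Real.log (prefixMarginal ξ k hk.le p)))
  else 0

lemma Dstep (μ ξ : (Fin n → R) → ℝ) (k : ℕ) (hk : k < n) :
    Dfun μ ξ (k + 1) = Dfun μ ξ k + dfun μ ξ k := by
  unfold Dfun dfun
  rw [dif_pos hk, dif_pos (show k + 1 ≤ n from hk), dif_pos hk.le]
  rw [sum_succ_eq_sum_snoc, ← Finset.sum_add_distrib]
  apply Finset.sum_congr rfl
  intro p _
  have hs1 := sum_prefixMarginal_snoc μ k hk p
  have hs2 := sum_prefixMarginal_snoc ξ k hk p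
  calc ∑ r : R, prefixMarginal μ (k + 1) hk (Fin.snoc p r) *
        (Real.log (prefixMarginal μ (k + 1) hk (Fin.snoc p r)) -
          Real.log (prefixMarginal ξ (k + 1) hk (Fin.snoc p r)))
      = ∑ r : R, (prefixMarginal μ (k + 1) hk (Fin.snoc p r) *
          ((Real.log (prefixMarginal μ (k + 1) hk (Fin.snoc p r)) -
              Real.log (prefixMarginal μ k hk.le p)) -
            (Real.log (prefixMarginal ξ (k + 1) hk (Fin.snoc p r)) -
              Real.log (prefixMarginal ξ k hk.le p))) +
          prefixMarginal μ (k + 1) hk (Fin.snoc p r) *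
            (Real.log (prefixMarginal μ k hk.le p) -
              Real.log (prefixMarginal ξ k hk.le p))) :=
        Finset.sum_congr rfl (fun r _ => by ring)
    _ = (∑ r : R, prefixMarginal μ (k + 1) hk (Fin.snoc p r) *
          ((Real.log (prefixMarginal μ (k + 1) hk (Fin.snoc p r)) -
              Real.log (prefixMarginal μ k hk.le p)) -
            (Real.log (prefixMarginal ξ (k + 1) hk (Fin.snoc p r)) -
              Real.log (prefixMarginal ξ k hk.le p)))) +
        (∑ r : R, prefixMarginal μ (k + 1) hk (Fin.snoc p r)) *
          (Real.log (prefixMarginal μ k hk.le p) -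
            Real.log (prefixMarginal ξ k hk.le p)) := by
        rw [Finset.sum_add_distrib, Finset.sum_mul]
    _ = _ := by rw [hs1]; ring

lemma Dtele (μ ξ : (Fin n → R) → ℝ) :
    ∀ j : ℕ, j ≤ n → ∑ k ∈ Finset.range j, dfun μ ξ k = Dfun μ ξ j - Dfun μ ξ 0
  | 0, _ => by simp
  | (j + 1), hj => by
      rw [Finset.sum_range_succ, Dtele μ ξ j (by omega), Dstep μ ξ j (by omega)]; ring

lemma step_ineq (μ ξ : (Fin n → R) → ℝ) (hμ0 : ∀ x, 0 ≤ μ x) (hξ0 : ∀ x, 0 ≤ ξ x)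
    (himp : ∀ x, 0 < μ x → 0 < ξ x) (k : ℕ) (hk : k < n) :
    ∑ p : Fin k → R, ∑ r : R, prefixMarginal μ k hk.le p *
        (prefixMarginal μ (k + 1) hk (Fin.snoc p r) / prefixMarginal μ k hk.le p -
          prefixMarginal ξ (k + 1) hk (Fin.snoc p r) / prefixMarginal ξ k hk.le p) ^ 2 ≤
      dfun μ ξ k := by
  unfold dfun
  rw [dif_pos hk]
  apply Finset.sum_le_sum
  intro p _
  set A := prefixMarginal μ k hk.le p with hA
  set B := prefixMarginal ξ k hk.le p with hB
  have hA0 : 0 ≤ A := prefixMarginal_nonneg μ hμ0 k hk.le p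
  have hs1 := sum_prefixMarginal_snoc μ k hk p
  have hs2 := sum_prefixMarginal_snoc ξ k hk p
  have ha0 : ∀ r, 0 ≤ prefixMarginal μ (k + 1) hk (Fin.snoc p r) :=
    fun r => prefixMarginal_nonneg μ hμ0 (k + 1) hk _
  have hb0 : ∀ r, 0 ≤ prefixMarginal ξ (k + 1) hk (Fin.snoc p r) :=
    fun r => prefixMarginal_nonneg ξ hξ0 (k + 1) hk _
  rcases eq_or_lt_of_le hA0 with hAz | hApos
  · -- A = 0 : both sides vanish
    have haz : ∀ r, prefixMarginal μ (k + 1) hk (Fin.snoc p r) = 0 := by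
      intro r
      have hle : prefixMarginal μ (k + 1) hk (Fin.snoc p r) ≤ A := by
        rw [hA, ← hs1]
        exact Finset.single_le_sum (fun r _ => ha0 r) (Finset.mem_univ r)
      exact le_antisymm (by rw [← hAz] at hle; exact hle) (ha0 r)
    apply le_of_eq
    calc ∑ r : R, A * (prefixMarginal μ (k + 1) hk (Fin.snoc p r) / A -
          prefixMarginal ξ (k + 1) hk (Fin.snoc p r) / B) ^ 2
        = 0 := Finset.sum_eq_zero (fun r _ => by rw [← hAz, zero_mul])
      _ = _ := (Finset.sum_eq_zero (fun r _ => by rw [haz r, zero_mul])).symm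
  · have hBpos : 0 < B := prefixMarginal_pos_of μ ξ hμ0 hξ0 himp k hk.le p hApos
    set y : R → ℝ := fun r => prefixMarginal μ (k + 1) hk (Fin.snoc p r) / A with hy
    set z : R → ℝ := fun r => prefixMarginal ξ (k + 1) hk (Fin.snoc p r) / B with hz
    have hy0 : ∀ r, 0 ≤ y r := fun r => div_nonneg (ha0 r) hA0
    have hz0 : ∀ r, 0 ≤ z r := fun r => div_nonneg (hb0 r) hBpos.le
    have hy1 : ∑ r, y r = 1 := by
      rw [hy]; rw [← Finset.sum_div, hs1, ← hA, div_self (ne_of_gt hApos)]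
    have hz1 : ∑ r, z r = 1 := by
      rw [hz]; rw [← Finset.sum_div, hs2, ← hB, div_self (ne_of_gt hBpos)]
    have himp' : ∀ r, 0 < y r → 0 < z r := by
      intro r hyr
      have hapos : 0 < prefixMarginal μ (k + 1) hk (Fin.snoc p r) := by
        by_contra hc
        push_neg at hc
        have : prefixMarginal μ (k + 1) hk (Fin.snoc p r) = 0 := le_antisymm hc (ha0 r)
        rw [hy] at hyr
        simp only [this, zero_div] at hyr
        exact lt_irrefl 0 hyr
      have hbpos := prefixMarginal_pos_of μ ξ hμ0 hξ0 himp (k + 1) hk _ hapos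
      exact div_pos hbpos hBpos
    have hE := entropy_ineq y z hy0 hz0 hy1 hz1 himp'
    have hconv : ∀ r : R, A * (y r * (Real.log (y r) - Real.log (z r))) =
        prefixMarginal μ (k + 1) hk (Fin.snoc p r) *
          ((Real.log (prefixMarginal μ (k + 1) hk (Fin.snoc p r)) - Real.log A) -
            (Real.log (prefixMarginal ξ (k + 1) hk (Fin.snoc p r)) - Real.log B)) := by
      intro r
      rcases eq_or_lt_of_le (ha0 r) with haz | hapos
      · rw [hy]
        simp only [← haz, zero_div, zero_mul, mul_zero]
      · have hbpos := prefixMarginal_pos_of μ ξ hμ0 hξ0 himp (k + 1) hk _ hapos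
        rw [hy, hz]
        simp only
        rw [Real.log_div (ne_of_gt hapos) (ne_of_gt hApos),
          Real.log_div (ne_of_gt hbpos) (ne_of_gt hBpos)]
        field_simp
    calc ∑ r : R, A * (y r - z r) ^ 2
        = A * ∑ r : R, (y r - z r) ^ 2 := by rw [Finset.mul_sum]
      _ ≤ A * ∑ r : R, y r * (Real.log (y r) - Real.log (z r)) :=
          mul_le_mul_of_nonneg_left hE hA0
      _ = ∑ r : R, A * (y r * (Real.log (y r) - Real.log (z r))) := by rw [Finset.mul_sum]
      _ = _ := Finset.sum_congr rfl (fun r _ => hconv r)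

end
theorem stmt_4 {R M : Type*} [Fintype R] [DecidableEq R] [Fintype M] (n : ℕ)
    (μ : (Fin n → R) → ℝ) (hμ0 : ∀ x, 0 ≤ μ x) (hμ1 : ∑ x, μ x = 1)
    (ρ : M → (Fin n → R) → ℝ) (hρ0 : ∀ m x, 0 ≤ ρ m x) (hρ1 : ∀ m, ∑ x, ρ m x = 1)
    (w : M → ℝ) (hw : ∀ m, 0 < w m) (hw1 : ∑ m, w m ≤ 1)
    (ξ : (Fin n → R) → ℝ) (hξ : ∀ x, ξ x = ∑ m, w m * ρ m x) :
    ∀ m : M, (∀ x, 0 < μ x → 0 < ρ m x) →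
      ∑ k : Fin n, ∑ p : Fin k → R, ∑ r : R,
          prefixMarginal μ k k.isLt.le p *
            (prefixMarginal μ (k + 1) k.isLt (Fin.snoc p r) / prefixMarginal μ k k.isLt.le p -
              prefixMarginal ξ (k + 1) k.isLt (Fin.snoc p r) / prefixMarginal ξ k k.isLt.le p) ^ 2 ≤
        - Real.log (w m) + ∑ x, μ x * Real.log (μ x / ρ m x) := by
  intro m hm
  have hξ0 : ∀ x, 0 ≤ ξ x := by
    intro x
    rw [hξ]
    exact Finset.sum_nonneg fun m' _ => mul_nonneg (hw m').le (hρ0 m' x)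
  have hξlb : ∀ x, w m * ρ m x ≤ ξ x := by
    intro x
    rw [hξ]
    exact Finset.single_le_sum (fun m' _ => mul_nonneg (hw m').le (hρ0 m' x))
      (Finset.mem_univ m)
  have himpξ : ∀ x, 0 < μ x → 0 < ξ x := by
    intro x hx
    exact lt_of_lt_of_le (mul_pos (hw m) (hm x hx)) (hξlb x)
  -- sum of ξ
  have hΞ : ∑ x, ξ x = ∑ m', w m' := by
    calc ∑ x, ξ x = ∑ x, ∑ m', w m' * ρ m' x := by
          exact Finset.sum_congr rfl fun x _ => hξ x
      _ = ∑ m', ∑ x, w m' * ρ m' x := Finset.sum_comm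
      _ = ∑ m', w m' := by
          apply Finset.sum_congr rfl
          intro m' _
          rw [← Finset.mul_sum, hρ1, mul_one]
  have hΞ0 : 0 < ∑ x, ξ x := by
    rw [hΞ]
    exact lt_of_lt_of_le (hw m) (Finset.single_le_sum (fun m' _ => (hw m').le)
      (Finset.mem_univ m))
  have hΞ1 : ∑ x, ξ x ≤ 1 := by rw [hΞ]; exact hw1
  -- D 0 is nonnegative
  have hD0 : 0 ≤ Dfun μ ξ 0 := by
    unfold Dfun
    rw [dif_pos (Nat.zero_le n)]
    apply Finset.sum_nonneg
    intro p _
    rw [prefixMarginal_zero μ (Nat.zero_le n) p, prefixMarginal_zero ξ (Nat.zero_le n) p, hμ1]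
    rw [Real.log_one, one_mul, zero_sub]
    simp only [neg_nonneg]
    exact Real.log_nonpos hΞ0.le hΞ1
  -- D n equals the relative entropy with respect to ξ
  have hDn : Dfun μ ξ n = ∑ x, μ x * (Real.log (μ x) - Real.log (ξ x)) := by
    unfold Dfun
    rw [dif_pos (le_refl n)]
    apply Finset.sum_congr rfl
    intro p _
    rw [prefixMarginal_top μ (le_refl n) p, prefixMarginal_top ξ (le_refl n) p]
  -- final comparison with ρ m
  have hfinal : ∑ x, μ x * (Real.log (μ x) - Real.log (ξ x)) ≤
      - Real.log (w m) + ∑ x, μ x * Real.log (μ x / ρ m x) := by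
    have key : ∀ x, μ x * (Real.log (μ x) - Real.log (ξ x)) ≤
        μ x * Real.log (μ x / ρ m x) - μ x * Real.log (w m) := by
      intro x
      rcases eq_or_lt_of_le (hμ0 x) with hx | hx
      · rw [← hx]; simp
      · have hρx := hm x hx
        have hξx := himpξ x hx
        have hlog1 : Real.log (w m) + Real.log (ρ m x) ≤ Real.log (ξ x) := by
          rw [← Real.log_mul (ne_of_gt (hw m)) (ne_of_gt hρx)]
          exact Real.log_le_log (mul_pos (hw m) hρx) (hξlb x)
        have hlog2 : Real.log (μ x / ρ m x) = Real.log (μ x) - Real.log (ρ m x) :=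
          Real.log_div (ne_of_gt hx) (ne_of_gt hρx)
        rw [hlog2]
        have := mul_le_mul_of_nonneg_left hlog1 (hμ0 x)
        nlinarith [this]
    calc ∑ x, μ x * (Real.log (μ x) - Real.log (ξ x))
        ≤ ∑ x, (μ x * Real.log (μ x / ρ m x) - μ x * Real.log (w m)) :=
          Finset.sum_le_sum fun x _ => key x
      _ = ∑ x, μ x * Real.log (μ x / ρ m x) - (∑ x, μ x) * Real.log (w m) := by
          rw [Finset.sum_sub_distrib, Finset.sum_mul]
      _ = - Real.log (w m) + ∑ x, μ x * Real.log (μ x / ρ m x) := by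
          rw [hμ1]; ring
  -- assemble
  calc ∑ k : Fin n, ∑ p : Fin k → R, ∑ r : R,
        prefixMarginal μ k k.isLt.le p *
          (prefixMarginal μ (k + 1) k.isLt (Fin.snoc p r) / prefixMarginal μ k k.isLt.le p -
            prefixMarginal ξ (k + 1) k.isLt (Fin.snoc p r) /
              prefixMarginal ξ k k.isLt.le p) ^ 2
      ≤ ∑ k : Fin n, dfun μ ξ (k : ℕ) :=
        Finset.sum_le_sum fun k _ => step_ineq μ ξ hμ0 hξ0 himpξ (k : ℕ) k.isLt
    _ = ∑ k ∈ Finset.range n, dfun μ ξ k := Fin.sum_univ_eq_sum_range _ n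
    _ = Dfun μ ξ n - Dfun μ ξ 0 := Dtele μ ξ n (le_refl n)
    _ ≤ Dfun μ ξ n := by linarith
    _ = ∑ x, μ x * (Real.log (μ x) - Real.log (ξ x)) := hDn
    _ ≤ - Real.log (w m) + ∑ x, μ x * Real.log (μ x / ρ m x) := hfinal
end

section
/- In the two-state counterexample environment, the asymptotic normalized Cost_M of the informative mapping φ₀ equals H(0.9,0.1) + 0.1·H(0.9,0.1) = 1.1·H(0.9,0.1), while that of the trivial mapping φ₁ equals H(0.99,0.01); and H(0.99,0.01) < 1.1·H(0.9,0.1), so the trivial mapping has strictly smaller asymptotic cost. -/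
/-- Binary entropy (natural logarithm). -/
noncomputable def binEnt (p : ℝ) : ℝ := -(p * Real.log p) - (1 - p) * Real.log (1 - p)

lemma binEnt_symm (p : ℝ) : binEnt (1 - p) = binEnt p := by
  unfold binEnt
  ring_nf

lemma log_point_one : Real.log 0.1 = -Real.log 10 := by
  rw [show (0.1:ℝ) = 10⁻¹ by norm_num, Real.log_inv]

lemma log_point_01 : Real.log 0.01 = -(2 * Real.log 10) := by
  rw [show (0.01:ℝ) = ((10:ℝ)^(2:ℕ))⁻¹ by norm_num, Real.log_inv, Real.log_pow]
  push_cast; ring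

theorem stmt_13 :
    -- asymptotic normalised Cost_M of the informative mapping φ₀:
    -- state-transition entropy plus reward entropy
    ((0.9 * binEnt 0.9 + 0.1 * binEnt 0.9) + (0.9 * 0 + 0.1 * binEnt 0.1)
        = 1.1 * binEnt 0.9) ∧
    -- asymptotic normalised Cost_M of the trivial mapping φ₁:
    ((1 : ℝ) * 0 + 1 * binEnt 0.01 = binEnt 0.99) ∧
    -- the trivial mapping has strictly smaller asymptotic cost
    binEnt 0.99 < 1.1 * binEnt 0.9 := by
  have hs1 : binEnt 0.1 = binEnt 0.9 := by
    rw [show (0.1:ℝ) = 1 - 0.9 by norm_num, binEnt_symm]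
  have hs2 : binEnt 0.01 = binEnt 0.99 := by
    rw [show (0.01:ℝ) = 1 - 0.99 by norm_num, binEnt_symm]
  refine ⟨by rw [hs1]; ring, by rw [hs2]; ring, ?_⟩
  have h10 : (1:ℝ) ≤ Real.log 10 := by
    rw [Real.le_log_iff_exp_le (by norm_num)]
    exact le_of_lt (lt_trans Real.exp_one_lt_d9 (by norm_num))
  have h99 : -Real.log 0.99 ≤ 1/0.99 - 1 := by
    have h := Real.log_le_sub_one_of_pos (show (0:ℝ) < 1/0.99 by norm_num)
    rw [one_div, Real.log_inv] at h
    linarith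
  have h9neg : Real.log 0.9 < 0 := Real.log_neg (by norm_num) (by norm_num)
  unfold binEnt
  rw [show (1:ℝ) - 0.99 = 0.01 by norm_num, show (1:ℝ) - 0.9 = 0.1 by norm_num,
    log_point_01, log_point_one]
  nlinarith [h10, h99, h9neg]
end
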